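/- In an S-Motzkin path produced by the greedy insertion of horizontal steps into a Dyck path (each h placed in the leftmost admissible position), there do not exist two horizontal steps at the same height such that all steps strictly between them lie at or above that height. -/

import Mathlib

inductive Step : Type
  | u : Step
  | d : Step
  | h : Step
deriving DecidableEq, Repr

def stepVal : Step → ℤ
  | Step.u => 1
  | Step.d => -1
  | Step.h => 0

/-- Sum of step values (final height) of a word. -/
def hsum (w : List Step) : ℤ := (w.map stepVal).sum

/-- All prefixes have nonnegative height. -/
def NonnegPrefixes (w : List Step) : Prop := ∀ p : List Step, p <+: w → 0 ≤ hsum p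

/-- A Motzkin path: nonnegative prefix heights and total height 0. -/
def IsMotzkin (w : List Step) : Prop := NonnegPrefixes w ∧ hsum w = 0

/-- The word (hu)^n. -/
def huWord (n : ℕ) : List Step := (List.replicate n [Step.h, Step.u]).flatten

/-- An S-Motzkin path with n up, n down, n horizontal steps:
a Motzkin path whose subword of non-down steps is (hu)^n. -/
def IsSMotzkin (n : ℕ) (w : List Step) : Prop :=
  IsMotzkin w ∧ w.count Step.u = n ∧ w.count Step.d = n ∧ w.count Step.h = n ∧
    w.filter (fun s => s ≠ Step.d) = huWord n

/-- A nonempty word over {h, u}. -/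
def HUBlock (A : List Step) : Prop := A ≠ [] ∧ ∀ s ∈ A, s = Step.h ∨ s = Step.u

/-- Glue blocks A_i with runs of d_i down steps: A_0 d^{d_1} A_1 d^{d_2} ... -/
def joinAM (As : List (List Step)) (ds : List ℕ) : List Step :=
  (List.zipWith (fun A k => A ++ List.replicate k Step.d) As ds).flatten

/-- w decomposes as A_0 D_1 A_1 D_2 ... A_{t-1} D_t with A_i nonempty over {h,u}
and D_i nonempty runs of down steps. -/
def AMDecomp (w : List Step) (As : List (List Step)) (ds : List ℕ) : Prop :=
  As.length = ds.length ∧ (∀ A ∈ As, HUBlock A) ∧ (∀ k ∈ ds, 0 < k) ∧ w = joinAM As ds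

/-- An Asinowski–Mansour path with n up, n down, n horizontal steps. -/
def IsAM (n : ℕ) (w : List Step) : Prop :=
  IsMotzkin w ∧ w.count Step.u = n ∧ w.count Step.d = n ∧ w.count Step.h = n ∧
    ∃ As ds, AMDecomp w As ds

/-- A Dyck path with n up and n down steps, encoded over the alphabet Step. -/
def IsDyck (n : ℕ) (w : List Step) : Prop :=
  (∀ s ∈ w, s = Step.u ∨ s = Step.d) ∧ w.count Step.u = n ∧ w.count Step.d = n ∧
    NonnegPrefixes w

/-- Height of the path at the start of step i. -/
def heightAt (w : List Step) (i : ℕ) : ℤ := hsum (w.take i)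

/-- Two horizontal steps at positions i < j, at the same height, with all steps
strictly between them at or above that height. -/
def Matched (w : List Step) (i j : ℕ) : Prop :=
  i < j ∧ w[i]? = some Step.h ∧ w[j]? = some Step.h ∧
    heightAt w i = heightAt w j ∧ ∀ k, i < k → k < j → heightAt w i ≤ heightAt w k

/-- Positions of the horizontal steps of w, from left to right. -/
def hPositions (w : List Step) : List ℕ := List.findIdxs (fun s => s = Step.h) w

/-- Lexicographic (weak) order on lists of naturals. -/
def LexLe (l l' : List ℕ) : Prop := l = l' ∨ List.Lex (· < ·) l l'

/-- w is an S-Motzkin word obtained by inserting horizontal steps into D. -/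
def ValidIns (D w : List Step) : Prop :=
  (∃ m, IsSMotzkin m w) ∧ w.filter (fun s => s ≠ Step.h) = D

/-- w is the greedy h-insertion into D: each h leftmost, i.e. the list of positions
of the h's is lexicographically minimal among all valid insertions. -/
def GreedyFor (D w : List Step) : Prop :=
  ValidIns D w ∧ ∀ w', ValidIns D w' → LexLe (hPositions w) (hPositions w')

/-! In the greedy word every `h` other than the first step is immediately preceded by `u`.
An `hh` factor is impossible because the non-`d` subword is `(hu)^n`, and a `dh` factor could be
swapped to `hd`: the path stays valid (no prefix height decreases) while an `h` moves left,
contradicting lexicographic minimality. So the step just before the second `h` of a matched pair is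
an up step, which starts strictly below the common height. -/

lemma hsum_append (a b : List Step) : hsum (a ++ b) = hsum a + hsum b := by
  simp [hsum]

lemma heightAt_succ {w : List Step} {k : ℕ} {s : Step} (hs : w[k]? = some s) :
    heightAt w (k + 1) = heightAt w k + stepVal s := by
  simp [heightAt, List.take_add_one, hs, hsum]

lemma List.pair_infix_of_getElem? {α : Type*} {l : List α} {k : ℕ} {a b : α}
    (ha : l[k]? = some a) (hb : l[k + 1]? = some b) : [a, b] <:+: l := by
  obtain ⟨hk, rfl⟩ := List.getElem?_eq_some_iff.mp hb
  have : (l.drop k).take 2 = [a, l[k + 1]] := by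
    simp [List.take_add_one, ha]
  exact this ▸ (List.take_prefix _ _).isInfix.trans (List.drop_suffix _ _).isInfix

lemma isChain_ne_huWord (n : ℕ) : List.IsChain (· ≠ ·) (huWord n) := by
  suffices List.IsChain (· ≠ ·) (Step.u :: huWord n) from this.tail
  induction n with
  | zero => simp [huWord]
  | succ n ih =>
    simpa [huWord, List.replicate_succ] using
      List.IsChain.cons_cons (show Step.u ≠ Step.h by decide)
        (List.IsChain.cons_cons (show Step.h ≠ Step.u by decide) ih)

lemma IsSMotzkin.not_hh_infix {m : ℕ} {w : List Step} (hw : IsSMotzkin m w) :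
    ¬ [Step.h, Step.h] <:+: w := by
  intro hhh
  have := (isChain_ne_huWord m).infix (hw.2.2.2.2 ▸ hhh.filter (fun s => s ≠ Step.d))
  simp at this

section Swap

variable (x y : List Step)

lemma filter_swap_of_not {p : Step → Bool} (a b : Step) (ha : p a = false) :
    (x ++ a :: b :: y).filter p = (x ++ b :: a :: y).filter p := by
  simp [List.filter_append, List.filter_cons, ha]

lemma hsum_take_le_swap_dh (k : ℕ) :
    hsum ((x ++ Step.d :: Step.h :: y).take k) ≤ hsum ((x ++ Step.h :: Step.d :: y).take k) := by
  simp only [List.take_append, hsum_append, add_le_add_iff_left]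
  match k - x.length with
  | 0 => simp
  | 1 => simp [hsum, stepVal]
  | r + 2 => simp [hsum, stepVal]

lemma NonnegPrefixes.swap_dh (hw : NonnegPrefixes (x ++ Step.d :: Step.h :: y)) :
    NonnegPrefixes (x ++ Step.h :: Step.d :: y) := by
  intro p hp
  rw [List.prefix_iff_eq_take.mp hp]
  exact (hw _ (List.take_prefix _ _)).trans (hsum_take_le_swap_dh x y _)

lemma ValidIns.swap_dh {D : List Step} (hv : ValidIns D (x ++ Step.d :: Step.h :: y)) :
    ValidIns D (x ++ Step.h :: Step.d :: y) := by
  obtain ⟨⟨m, ⟨hnn, hz⟩, hu, hd, hh, hf⟩, hD⟩ := hv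
  have hp : (x ++ Step.d :: Step.h :: y).Perm (x ++ Step.h :: Step.d :: y) :=
    (List.Perm.swap _ _ _).append_left x
  refine ⟨⟨m, ⟨hnn.swap_dh x y, ?_⟩, hp.count_eq _ ▸ hu, hp.count_eq _ ▸ hd,
    hp.count_eq _ ▸ hh, filter_swap_of_not x y Step.d Step.h (p := (· ≠ Step.d)) (by decide) ▸ hf⟩,
    (filter_swap_of_not x y Step.h Step.d (p := (· ≠ Step.h)) (by decide)).symm ▸ hD⟩
  rwa [hsum, ← (hp.map stepVal).sum_eq]

lemma lex_map_succ {l l' : List ℕ} (h : List.Lex (· < ·) l l') :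
    List.Lex (· < ·) (l.map (· + 1)) (l'.map (· + 1)) := by
  induction h with
  | nil => exact List.Lex.nil
  | cons _ ih => exact List.Lex.cons ih
  | rel h => exact List.Lex.rel (by simpa using h)

lemma hPositions_lex_swap :
    List.Lex (· < ·) (hPositions (x ++ Step.h :: Step.d :: y))
      (hPositions (x ++ Step.d :: Step.h :: y)) := by
  induction x with
  | nil =>
    simp only [List.nil_append, hPositions, List.findIdxs_cons]
    norm_num
    exact List.Lex.rel (by omega)
  | cons a x ih =>
    simp only [List.cons_append, hPositions, List.findIdxs_cons] at ih ⊢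
    rw [List.findIdxs_start (s := 0 + 1), List.findIdxs_start (s := 0 + 1)]
    cases decide (a = Step.h)
    · simpa using lex_map_succ ih
    · simpa using List.Lex.cons (a := 0) (lex_map_succ ih)

end Swap

lemma GreedyFor.not_dh_infix {D w : List Step} (hw : GreedyFor D w) :
    ¬ [Step.d, Step.h] <:+: w := by
  rintro ⟨x, y, rfl⟩
  simp only [List.append_assoc, List.cons_append, List.nil_append] at hw
  have hlt := hPositions_lex_swap x y
  rcases hw.2 _ (hw.1.swap_dh x y) with heq | hgt
  · exact irrefl _ (heq ▸ hlt)
  · exact asymm hgt hlt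

lemma GreedyFor.getElem?_eq_u_of_succ_eq_h {D w : List Step} (hw : GreedyFor D w) {k : ℕ}
    (hk : w[k + 1]? = some Step.h) : w[k]? = some Step.u := by
  cases hs : w[k]? with
  | none =>
    have := (List.getElem?_eq_some_iff.mp hk).1
    have := List.getElem?_eq_none_iff.mp hs
    omega
  | some s =>
    cases s with
    | u => rfl
    | d => exact absurd (List.pair_infix_of_getElem? hs hk) hw.not_dh_infix
    | h =>
      obtain ⟨⟨m, hm⟩, -⟩ := hw.1
      exact absurd (List.pair_infix_of_getElem? hs hk) hm.not_hh_infix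

theorem greedy_no_matched_pair_general (D w : List Step)
    (hw : GreedyFor D w) :
    ¬ ∃ i j, Matched w i j := by
  rintro ⟨i, j, hij, hi, hj, hheight, hmin⟩
  obtain ⟨k, rfl⟩ : ∃ k, j = k + 1 := ⟨j - 1, by omega⟩
  have hk := hw.getElem?_eq_u_of_succ_eq_h hj
  have hik : i < k := by
    rcases Nat.lt_succ_iff_lt_or_eq.mp hij with h | rfl
    · exact h
    · simp [hi] at hk
  have hstep := heightAt_succ hk
  linarith [hmin k hik k.lt_succ_self, show stepVal Step.u = 1 from rfl]

/-- the greedy h-insertion into a Dyck path has no two horizontal steps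
at the same height with all intermediate steps at or above that height. -/
theorem greedy_no_matched_pair (n : ℕ) (D w : List Step)
    (hD : IsDyck n D) (hw : GreedyFor D w) :
    ¬ ∃ i j, Matched w i j :=
  greedy_no_matched_pair_general D w hw
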